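/- Let A ⊆ ℝ^d with 0 < r < reach A, let a, b ∈ A with 0 < |b−a| < r, and suppose Tan(A,a) is one-dimensional, i.e. span(Tan(A,a)) is a line L. Let π be the orthogonal projection onto the affine line a + L. Then π(b) − a ∈ Tan(A,a), |π(b) − a| ≥ (√3/2)|b−a|, and |π(b) − a| ≥ √3·|b − π(b)|. -/

import Mathlib

open Metric Set MeasureTheory
open scoped RealInnerProductSpace ENNReal NNReal

noncomputable section

abbrev Euc (d : ℕ) := EuclideanSpace ℝ (Fin d)

/-- Points of the ambient space having a unique nearest point in `A`. -/
def unp {d : ℕ} (A : Set (Euc d)) : Set (Euc d) :=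
  {x | ∃! a, a ∈ A ∧ dist x a = Metric.infDist x A}

/-- Federer's local reach `reach (A, a)`. -/
def reachAt {d : ℕ} (A : Set (Euc d)) (a : Euc d) : ℝ≥0∞ :=
  sSup {r : ℝ≥0∞ | ∀ x : Euc d, edist x a < r → x ∈ unp A}

/-- Federer's reach of a set. -/
def reach {d : ℕ} (A : Set (Euc d)) : ℝ≥0∞ := ⨅ a ∈ A, reachAt A a

/-- The tangent cone of `A` at `a`: `u` is a tangent vector iff `u = 0` or `u` is a limit of
`r i • (x i - a)` with `x i ∈ A \ {a}`, `x i → a`, `r i > 0`. -/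
def tanCone {d : ℕ} (A : Set (Euc d)) (a : Euc d) : Set (Euc d) :=
  {u | u = 0 ∨ ∃ (x : ℕ → Euc d) (r : ℕ → ℝ),
    (∀ n, x n ∈ A ∧ x n ≠ a) ∧
    Filter.Tendsto x Filter.atTop (nhds a) ∧
    (∀ n, 0 < r n) ∧
    Filter.Tendsto (fun n => r n • (x n - a)) Filter.atTop (nhds u)}

/-- The dimension of the tangent cone of `A` at `a`. -/
def tanDim {d : ℕ} (A : Set (Euc d)) (a : Euc d) : ℕ :=
  Module.finrank ℝ (Submodule.span ℝ (tanCone A a))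

/-- The set of points of `A` at which the tangent cone has dimension `k`. -/
def Tk {d : ℕ} (A : Set (Euc d)) (k : ℕ) : Set (Euc d) :=
  {x | x ∈ A ∧ tanDim A x = k}

/-- Whitney's fullness `Θ(σ) = vol_k(σ) / (diam σ)^k` of a set. -/
def fullness {d : ℕ} (k : ℕ) (s : Set (Euc d)) : ℝ :=
  (μH[(k : ℝ)] s).toReal / (Metric.diam s) ^ k

/-- The metric `ρ_k` on the Grassmannian of subspaces of `ℝ^d`. -/
def grassDist {d : ℕ} (U V : Submodule ℝ (Euc d)) : ℝ :=
  max (sSup ((fun u => Metric.infDist u (V : Set (Euc d))) '' {u | u ∈ U ∧ ‖u‖ = 1}))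
      (sSup ((fun v => Metric.infDist v (U : Set (Euc d))) '' {v | v ∈ V ∧ ‖v‖ = 1}))

/-!
Every point at distance `< r < reach A` from `A` has a unique nearest point, and the nearest-point
map is continuous there. Hence moving from such a point along its unit normal increases the distance
to `A` at rate `1 - o(1)`, and a continuous induction on the radius extends each normal ray to any
length `T < r`. This yields Federer's normal inequality `2T ⟪x - p, q - p⟫ ≤ dist(x, A) ‖q - p‖²`
(`p` the foot of `x`, `q ∈ A`). Applied at the foot of `a + t (b - a)` with `q = a` and `q = b`, it
bounds `dist(a + t (b - a), A)` by `t (1 + 4t) ‖b - a‖² / (2T)`; rescaling the feet by `1 / t`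
produces a tangent vector `w` with `‖b - a - w‖ ≤ ‖b - a‖² / (2T) < ‖b - a‖ / 2`. When the tangent
cone spans a line, that line is `ℝ w`, the projection of `b - a` is a positive multiple of `w`, and
Pythagoras gives the two `√3` bounds.
-/

open Filter Topology

section

variable {d : ℕ} {A : Set (Euc d)} {r : ℝ}

open Classical in
def nearestPt (A : Set (Euc d)) (x : Euc d) : Euc d :=
  if h : x ∈ unp A then h.exists.choose else x

lemma nearestPt_mem {x : Euc d} (hx : x ∈ unp A) : nearestPt A x ∈ A := by
  rw [nearestPt, dif_pos hx]; exact hx.exists.choose_spec.1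

lemma dist_nearestPt {x : Euc d} (hx : x ∈ unp A) : dist x (nearestPt A x) = infDist x A := by
  rw [nearestPt, dif_pos hx]; exact hx.exists.choose_spec.2

lemma eq_nearestPt {x q : Euc d} (hx : x ∈ unp A) (hq : q ∈ A) (hdq : dist x q = infDist x A) :
    q = nearestPt A x :=
  hx.unique ⟨hq, hdq⟩ ⟨nearestPt_mem hx, dist_nearestPt hx⟩

lemma norm_sub_nearestPt {z : Euc d} (hz : z ∈ unp A) : ‖z - nearestPt A z‖ = infDist z A := by
  rw [← dist_eq_norm, dist_nearestPt hz]

def unitNormal (A : Set (Euc d)) (z : Euc d) : Euc d :=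
  (infDist z A)⁻¹ • (z - nearestPt A z)

lemma norm_unitNormal {z : Euc d} (hz : z ∈ unp A) (hz0 : 0 < infDist z A) :
    ‖unitNormal A z‖ = 1 := by
  rw [unitNormal, norm_smul, norm_sub_nearestPt hz, norm_inv, Real.norm_of_nonneg hz0.le,
    inv_mul_cancel₀ hz0.ne']

lemma inner_sub_nearestPt_unitNormal {z : Euc d} (hz : z ∈ unp A) (hz0 : 0 < infDist z A) :
    ⟪z - nearestPt A z, unitNormal A z⟫ = infDist z A := by
  rw [unitNormal, real_inner_smul_right, real_inner_self_eq_norm_sq, norm_sub_nearestPt hz]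
  field_simp

lemma smul_mem_tanCone {a u : Euc d} (hu : u ∈ tanCone A a) {c : ℝ} (hc : 0 < c) :
    c • u ∈ tanCone A a := by
  rcases hu with rfl | ⟨x, ρ, hxA, hx, hρ, hu⟩
  · exact Or.inl (smul_zero c)
  · refine Or.inr ⟨x, fun n => c * ρ n, hxA, hx, fun n => mul_pos hc (hρ n), ?_⟩
    simpa [smul_smul] using hu.const_smul c

lemma mem_tanCone_of_tendsto {a u : Euc d} {x : ℕ → Euc d} {c : ℕ → ℝ} (hxA : ∀ n, x n ∈ A)
    (hx : Tendsto x atTop (𝓝 a)) (hc : ∀ n, 0 < c n)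
    (hu : Tendsto (fun n => c n • (x n - a)) atTop (𝓝 u)) : u ∈ tanCone A a := by
  rcases eq_or_ne u 0 with rfl | hu0
  · exact Or.inl rfl
  obtain ⟨N, hN⟩ := eventually_atTop.mp (hu.eventually_ne hu0)
  refine Or.inr ⟨fun n => x (n + N), fun n => c (n + N),
    fun n => ⟨hxA _, fun h => hN (n + N) (Nat.le_add_left N n) (by simp [h])⟩,
    (tendsto_add_atTop_iff_nat N).2 hx, fun n => hc _, (tendsto_add_atTop_iff_nat N).2 hu⟩

lemma exists_mem_tanCone_norm_sub_le_of_tendsto {a v : Euc d} {x : ℕ → Euc d} {c ρ : ℕ → ℝ}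
    {ρ₀ : ℝ} (hxA : ∀ n, x n ∈ A) (hx : Tendsto x atTop (𝓝 a)) (hc : ∀ n, 0 < c n)
    (hρ : Tendsto ρ atTop (𝓝 ρ₀)) (hbound : ∀ n, ‖v - c n • (x n - a)‖ ≤ ρ n) :
    ∃ w ∈ tanCone A a, ‖v - w‖ ≤ ρ₀ := by
  obtain ⟨M, hM⟩ := hρ.bddAbove_range
  have hball : ∀ n, c n • (x n - a) ∈ closedBall v M := fun n => by
    rw [mem_closedBall, dist_comm, dist_eq_norm]
    exact (hbound n).trans (hM ⟨n, rfl⟩)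
  obtain ⟨w, -, φ, hφ, hw⟩ := (isCompact_closedBall v M).tendsto_subseq hball
  exact ⟨w, mem_tanCone_of_tendsto (fun n => hxA (φ n)) (hx.comp hφ.tendsto_atTop)
      (fun n => hc (φ n)) hw,
    le_of_tendsto_of_tendsto' (tendsto_const_nhds.sub hw).norm (hρ.comp hφ.tendsto_atTop)
      fun n => hbound (φ n)⟩

def UniqueNearestWithin (A : Set (Euc d)) (r : ℝ) : Prop :=
  ∀ x, infDist x A < r → x ∈ unp A

lemma uniqueNearestWithin_of_lt_reach (hrA : ENNReal.ofReal r < reach A) (hA : A.Nonempty) :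
    UniqueNearestWithin A r := by
  intro x hx
  obtain ⟨a, ha, hxa⟩ := (infDist_lt_iff hA).mp hx
  obtain ⟨s, hs, hrs⟩ := lt_sSup_iff.mp (hrA.trans_le (biInf_le _ ha))
  refine hs x (lt_trans ?_ hrs)
  rwa [edist_dist, ENNReal.ofReal_lt_ofReal_iff_of_nonneg dist_nonneg]

namespace UniqueNearestWithin

lemma isClosed (hU : UniqueNearestWithin A r) (hr : 0 < r) : IsClosed A := by
  refine isClosed_of_closure_subset fun x hx => ?_
  have h0 : infDist x A = 0 := infDist_zero_of_mem_closure hx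
  have hxU := hU x (h0.symm ▸ hr)
  have hx_eq : x = nearestPt A x := dist_eq_zero.mp ((dist_nearestPt hxU).trans h0)
  exact hx_eq ▸ nearestPt_mem hxU

lemma continuousAt_nearestPt (hU : UniqueNearestWithin A r) {y : Euc d}
    (hy : infDist y A < r) : ContinuousAt (nearestPt A) y := by
  have hnear : ∀ᶠ x in 𝓝 y, x ∈ unp A ∧ dist (nearestPt A x) y ≤ infDist y A + 2 := by
    filter_upwards [ball_mem_nhds y (lt_min one_pos (sub_pos.2 hy))] with x hx
    have hxy : dist x y < min 1 (r - infDist y A) := hx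
    have hδx : infDist x A ≤ infDist y A + dist x y := infDist_le_infDist_add_dist
    have hxU : x ∈ unp A := hU x (by linarith [min_le_right 1 (r - infDist y A)])
    refine ⟨hxU, ?_⟩
    have := dist_triangle (nearestPt A x) x y
    rw [dist_comm (nearestPt A x) x, dist_nearestPt hxU] at this
    linarith [min_le_left 1 (r - infDist y A)]
  refine (isCompact_closedBall y (infDist y A + 2)).tendsto_nhds_of_unique_mapClusterPt
    (hnear.mono fun x hx => hx.2) fun q _ hq => ?_
  have happrox : ∀ ε > 0, ∃ x ∈ unp A, dist x y < ε ∧ dist (nearestPt A x) q < ε := by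
    intro ε hε
    obtain ⟨x, hxq, ⟨hxU, -⟩, hxy⟩ :=
      ((hq.frequently (ball_mem_nhds q hε)).and_eventually
        (hnear.and (ball_mem_nhds y hε))).exists
    exact ⟨x, hxU, hxy, hxq⟩
  have hqA : q ∈ A := by
    refine (hU.isClosed (infDist_nonneg.trans_lt hy)).closure_subset (Metric.mem_closure_iff.mpr fun ε hε => ?_)
    obtain ⟨x, hxU, -, hxq⟩ := happrox ε hε
    exact ⟨nearestPt A x, nearestPt_mem hxU, by rwa [dist_comm]⟩
  refine eq_nearestPt (hU y hy) hqA (le_antisymm (le_of_forall_pos_lt_add fun ε hε => ?_)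
    (infDist_le_dist_of_mem hqA))
  obtain ⟨x, hxU, hxy, hxq⟩ := happrox (ε / 3) (by positivity)
  have hδx : infDist x A ≤ infDist y A + dist x y := infDist_le_infDist_add_dist
  have := dist_triangle4 y x (nearestPt A x) q
  rw [dist_comm y x, dist_nearestPt hxU] at this
  linarith

lemma exists_add_mul_le_infDist_add_smul_unitNormal (hU : UniqueNearestWithin A r)
    {z : Euc d} (hz0 : 0 < infDist z A) (hzr : infDist z A < r) {c : ℝ}
    (hc0 : 0 ≤ c) (hc1 : c < 1) :
    ∃ ε > 0, ∀ h ∈ Ioo 0 ε, infDist z A + c * h ≤ infDist (z + h • unitNormal A z) A := by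
  set δ := infDist z A
  set p := nearestPt A z
  set ν := unitNormal A z
  have hzU : z ∈ unp A := hU z hzr
  have hν : ‖ν‖ = 1 := norm_unitNormal hzU hz0
  have hzpν : ⟪z - p, ν⟫ = δ := inner_sub_nearestPt_unitNormal hzU hz0
  obtain ⟨ε, hε, hfoot⟩ := Metric.continuousAt_iff.mp (hU.continuousAt_nearestPt hzr)
    ((1 - c) * δ) (by nlinarith)
  refine ⟨min ε (r - δ), lt_min hε (by linarith), fun h ⟨hh0, hhε⟩ => ?_⟩
  set y := z + h • ν
  have hyz : dist y z = h := by
    rw [dist_eq_norm, add_sub_cancel_left, norm_smul, hν, mul_one, Real.norm_of_nonneg hh0.le]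
  have hyU : y ∈ unp A := hU y (by
    linarith [infDist_le_infDist_add_dist (x := y) (y := z) (s := A), min_le_right ε (r - δ)])
  set q := nearestPt A y
  have hpq : ‖p - q‖ ≤ (1 - c) * δ := by
    rw [← dist_eq_norm, dist_comm]
    exact (hfoot (hyz ▸ hhε.trans_le (min_le_left _ _))).le
  have hzq : δ ≤ ‖z - q‖ := dist_eq_norm z q ▸ infDist_le_dist_of_mem (nearestPt_mem hyU)
  have hzqν : c * δ ≤ ⟪z - q, ν⟫ := by
    have hsplit : ⟪z - q, ν⟫ = ⟪z - p, ν⟫ + ⟪p - q, ν⟫ := by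
      rw [← inner_add_left, sub_add_sub_cancel]
    have := (abs_le.mp ((abs_real_inner_le_norm (p - q) ν).trans_eq (by rw [hν, mul_one]))).1
    linarith
  have hyq : infDist y A ^ 2 = ‖z - q‖ ^ 2 + 2 * h * ⟪z - q, ν⟫ + h ^ 2 := by
    rw [← dist_nearestPt hyU, dist_eq_norm, show y - q = (z - q) + h • ν by simp only [y]; abel,
      norm_add_sq_real, real_inner_smul_right, norm_smul, hν, Real.norm_of_nonneg hh0.le]
    ring
  refine le_of_sq_le_sq ?_ infDist_nonneg
  nlinarith [pow_le_pow_left₀ hz0.le hzq 2, mul_le_mul_of_nonneg_left hzqν hh0.le,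
    mul_le_mul_of_nonneg_left hc1.le (mul_nonneg hc0 (sq_nonneg h))]

lemma exists_dist_le_add_mul_le_infDist (hU : UniqueNearestWithin A r)
    {x₀ : Euc d} (h0 : 0 < infDist x₀ A) {L : ℝ} (hL : 0 ≤ L) (hLr : infDist x₀ A + L < r)
    {c : ℝ} (hc0 : 0 ≤ c) (hc1 : c < 1) :
    ∃ z, dist z x₀ ≤ L ∧ infDist x₀ A + c * L ≤ infDist z A := by
  set t₀ := infDist x₀ A
  set K : Set (ℝ × Euc d) :=
    {p | p.1 ∈ Icc 0 L ∧ dist p.2 x₀ ≤ p.1 ∧ t₀ + c * p.1 ≤ infDist p.2 A}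
  have hKclosed : IsClosed K :=
    (isClosed_Icc.preimage continuous_fst).inter ((isClosed_le (by fun_prop) continuous_fst).inter
      (isClosed_le (by fun_prop) ((continuous_infDist_pt A).comp continuous_snd)))
  have hK : IsCompact K := (isCompact_Icc.prod (isCompact_closedBall x₀ L)).of_isClosed_subset
    hKclosed fun p hp => ⟨hp.1, mem_closedBall.2 (hp.2.1.trans hp.1.2)⟩
  have hIcc : Icc 0 L ⊆ Prod.fst '' K := by
    refine IsClosed.Icc_subset_of_forall_mem_nhdsWithin
      ((hK.image continuous_fst).isClosed.inter isClosed_Icc)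
      ⟨(0, x₀), ⟨⟨le_rfl, hL⟩, by simp, by simp [t₀]⟩, rfl⟩ ?_
    rintro _ ⟨⟨⟨s, z⟩, ⟨-, hzx, hzδ⟩, rfl⟩, hs0, hsL⟩
    dsimp only at hzx hzδ hs0 hsL ⊢
    have hzr : infDist z A < r := by
      linarith [infDist_le_infDist_add_dist (x := z) (y := x₀) (s := A)]
    obtain ⟨ε, hε, hgrow⟩ :=
      hU.exists_add_mul_le_infDist_add_smul_unitNormal (by nlinarith) hzr hc0 hc1
    have hzU : z ∈ unp A := hU z hzr
    refine mem_nhdsGT_iff_exists_Ioo_subset.mpr ⟨s + min ε (L - s),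
      by simp [hε, hsL], fun s' ⟨hss', hs'⟩ => ?_⟩
    have hh : s' - s ∈ Ioo 0 ε := ⟨by linarith, by linarith [min_le_left ε (L - s)]⟩
    refine ⟨(s', z + (s' - s) • unitNormal A z),
      ⟨⟨by linarith, by linarith [min_le_right ε (L - s)]⟩, ?_, ?_⟩, rfl⟩
    · calc dist (z + (s' - s) • unitNormal A z) x₀
          ≤ dist (z + (s' - s) • unitNormal A z) z + dist z x₀ := dist_triangle _ _ _
        _ = (s' - s) + dist z x₀ := by
          rw [dist_eq_norm, add_sub_cancel_left, norm_smul, norm_unitNormal hzU (by nlinarith),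
            mul_one, Real.norm_of_nonneg hh.1.le]
        _ ≤ s' := by linarith
    · linarith [hgrow _ hh]
  obtain ⟨⟨s, z⟩, ⟨-, hzx, hzδ⟩, rfl⟩ := hIcc ⟨hL, le_rfl⟩
  exact ⟨z, hzx, hzδ⟩

lemma exists_dist_le_add_le_infDist (hU : UniqueNearestWithin A r)
    {x₀ : Euc d} (h0 : 0 < infDist x₀ A) {L : ℝ} (hL : 0 ≤ L) (hLr : infDist x₀ A + L < r) :
    ∃ z, dist z x₀ ≤ L ∧ infDist x₀ A + L ≤ infDist z A := by
  obtain ⟨z, hz, hmax⟩ := (isCompact_closedBall x₀ L).exists_isMaxOn (nonempty_closedBall.2 hL)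
    (continuous_infDist_pt A).continuousOn
  have hlim : Tendsto (fun c : ℝ => infDist x₀ A + c * L) (𝓝[<] 1) (𝓝 (infDist x₀ A + L)) := by
    have : Continuous fun c : ℝ => infDist x₀ A + c * L := by fun_prop
    simpa using (this.tendsto 1).mono_left nhdsWithin_le_nhds
  refine ⟨z, hz, le_of_tendsto hlim ?_⟩
  filter_upwards [Ioo_mem_nhdsLT (zero_lt_one' ℝ)] with c hc
  obtain ⟨y, hy, hyδ⟩ := hU.exists_dist_le_add_mul_le_infDist h0 hL hLr hc.1.le hc.2
  exact hyδ.trans (hmax hy)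

lemma le_infDist_nearestPt_add_smul_unitNormal (hU : UniqueNearestWithin A r)
    {x : Euc d} (h0 : 0 < infDist x A) {T : ℝ} (hT : infDist x A ≤ T) (hTr : T < r) :
    T ≤ infDist (nearestPt A x + T • unitNormal A x) A := by
  set t₀ := infDist x A
  set p := nearestPt A x
  obtain ⟨z, hzx, hzδ⟩ := hU.exists_dist_le_add_le_infDist h0 (sub_nonneg.2 hT)
    (by linarith)
  have hxU : x ∈ unp A := hU x (by linarith)
  have hxp : ‖x - p‖ = t₀ := norm_sub_nearestPt hxU
  rw [dist_eq_norm] at hzx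
  have hzp : T ≤ ‖(z - x) + (x - p)‖ := by
    rw [sub_add_sub_cancel, ← dist_eq_norm]
    linarith [infDist_le_dist_of_mem (x := z) (nearestPt_mem hxU)]
  have hsame : SameRay ℝ (z - x) (x - p) := sameRay_iff_norm_add.mpr
    (le_antisymm (norm_add_le _ _) (by linarith))
  have hzx' : ‖z - x‖ = T - t₀ := by linarith [norm_add_le (z - x) (x - p)]
  have hcollinear := hsame.norm_smul_eq
  rw [hzx', hxp] at hcollinear
  suffices p + T • unitNormal A x = z by rw [this]; linarith
  have hz : z = x + t₀⁻¹ • ((T - t₀) • (x - p)) := by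
    rw [hcollinear, smul_smul, inv_mul_cancel₀ h0.ne', one_smul, add_sub_cancel]
  have hcoef : t₀⁻¹ * (T - t₀) = T * t₀⁻¹ - 1 := by field_simp
  rw [hz, unitNormal, smul_smul, smul_smul, hcoef, sub_smul, one_smul]
  abel

lemma two_mul_inner_sub_nearestPt_le (hU : UniqueNearestWithin A r) {x : Euc d}
    {T : ℝ} (hT0 : 0 < T) (hxT : infDist x A ≤ T) (hTr : T < r) {q : Euc d} (hq : q ∈ A) :
    2 * T * ⟪x - nearestPt A x, q - nearestPt A x⟫ ≤ infDist x A * ‖q - nearestPt A x‖ ^ 2 := by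
  set p := nearestPt A x
  have hxU : x ∈ unp A := hU x (by linarith)
  rcases (infDist_nonneg (x := x) (s := A)).eq_or_lt with h0 | h0
  · have hxp : x - p = 0 := by rw [← norm_eq_zero, norm_sub_nearestPt hxU, ← h0]
    rw [hxp, ← h0, inner_zero_left]; simp
  have hxp : x - p = infDist x A • unitNormal A x := by
    rw [unitNormal, smul_smul, mul_inv_cancel₀ h0.ne', one_smul]
  have hν := norm_unitNormal hxU h0
  have hfar : T ≤ ‖(p - q) + T • unitNormal A x‖ := by
    rw [← add_sub_right_comm, ← dist_eq_norm]
    exact (hU.le_infDist_nearestPt_add_smul_unitNormal h0 hxT hTr).trans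
      (infDist_le_dist_of_mem hq)
  have hsq := pow_le_pow_left₀ hT0.le hfar 2
  rw [norm_add_sq_real, norm_smul, hν, Real.norm_of_nonneg hT0.le, real_inner_smul_right,
    ← neg_sub q p, inner_neg_left, norm_neg, real_inner_comm] at hsq
  rw [hxp, real_inner_smul_left]
  nlinarith

lemma two_mul_mul_infDist_add_smul_le (hU : UniqueNearestWithin A r)
    {a b : Euc d} (ha : a ∈ A) (hb : b ∈ A) {t : ℝ} (ht0 : 0 ≤ t) (ht1 : t ≤ 1) {T : ℝ}
    (hT : ‖b - a‖ < T) (hTr : T < r) :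
    2 * T * infDist (a + t • (b - a)) A ≤ t * (1 + 4 * t) * ‖b - a‖ ^ 2 := by
  set v := b - a
  set y := a + t • v
  set e := infDist y A
  set γ := nearestPt A y
  have hT0 : 0 < T := (norm_nonneg v).trans_lt hT
  have hya : ‖y - a‖ = t * ‖v‖ := by
    rw [add_sub_cancel_left, norm_smul, Real.norm_of_nonneg ht0]
  have he : e ≤ t * ‖v‖ := hya ▸ dist_eq_norm y a ▸ infDist_le_dist_of_mem ha
  have heT : e ≤ T := he.trans (by nlinarith [norm_nonneg v])
  have hyU : y ∈ unp A := hU y (by linarith)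
  have hyγ : ‖y - γ‖ = e := norm_sub_nearestPt hyU
  have hnormal_a := hU.two_mul_inner_sub_nearestPt_le hT0 heT hTr ha
  have hnormal_b := hU.two_mul_inner_sub_nearestPt_le hT0 heT hTr hb
  have hesq : e ^ 2 = (1 - t) * ⟪y - γ, a - γ⟫ + t * ⟪y - γ, b - γ⟫ := by
    rw [← hyγ, ← real_inner_self_eq_norm_sq,
      show y - γ = (1 - t) • (a - γ) + t • (b - γ) by simp only [y, v]; module,
      inner_add_right, real_inner_smul_right, real_inner_smul_right]
  have haγ : ‖a - γ‖ ≤ 2 * t * ‖v‖ := by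
    have := norm_sub_le_norm_sub_add_norm_sub a y γ
    rw [norm_sub_rev a y, hya, hyγ] at this
    linarith
  have hbγ : ‖b - γ‖ ≤ ‖v‖ := by
    have := norm_sub_le_norm_sub_add_norm_sub b y γ
    rw [hyγ, show b - y = (1 - t) • v by simp only [y, v]; module, norm_smul,
      Real.norm_of_nonneg (by linarith)] at this
    linarith
  have hkey : 2 * T * e ^ 2 ≤ e * (t * (1 + 4 * t) * ‖v‖ ^ 2) := by
    have ha2 := pow_le_pow_left₀ (norm_nonneg _) haγ 2
    have hb2 := pow_le_pow_left₀ (norm_nonneg _) hbγ 2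
    have he0 : 0 ≤ e := infDist_nonneg
    nlinarith [mul_le_mul_of_nonneg_left hnormal_a (sub_nonneg.2 ht1),
      mul_le_mul_of_nonneg_left hnormal_b ht0, mul_le_mul_of_nonneg_left ha2 he0,
      mul_le_mul_of_nonneg_left hb2 he0, mul_nonneg (mul_nonneg he0 ht0) (sq_nonneg (t * ‖v‖))]
  rcases (infDist_nonneg : 0 ≤ e).eq_or_lt with h0 | h0
  · rw [show e = 0 from h0.symm, mul_zero]; positivity
  · nlinarith

lemma exists_mem_tanCone_norm_sub_le (hU : UniqueNearestWithin A r)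
    {a b : Euc d} (ha : a ∈ A) (hb : b ∈ A) {T : ℝ} (hT : ‖b - a‖ < T) (hTr : T < r) :
    ∃ w ∈ tanCone A a, ‖(b - a) - w‖ ≤ ‖b - a‖ ^ 2 / (2 * T) := by
  set v := b - a
  have hT0 : 0 < T := (norm_nonneg v).trans_lt hT
  set t : ℕ → ℝ := fun n => 1 / ((n : ℝ) + 1)
  have ht0 : ∀ n, 0 < t n := fun n => by positivity
  have ht1 : ∀ n, t n ≤ 1 := fun n => div_le_one_of_le₀ (by simp) (by positivity)
  have htlim : Tendsto t atTop (𝓝 0) := tendsto_one_div_add_atTop_nhds_zero_nat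
  set y : ℕ → Euc d := fun n => a + t n • v
  have hya : ∀ n, ‖y n - a‖ = t n * ‖v‖ := fun n => by
    rw [add_sub_cancel_left, norm_smul, Real.norm_of_nonneg (ht0 n).le]
  have hδy : ∀ n, infDist (y n) A ≤ t n * ‖v‖ := fun n =>
    hya n ▸ dist_eq_norm (y n) a ▸ infDist_le_dist_of_mem ha
  have hyU : ∀ n, y n ∈ unp A := fun n => hU _ (by nlinarith [ht1 n, norm_nonneg v, hδy n])
  have hchord : ∀ n, 2 * T * infDist (y n) A ≤ t n * (1 + 4 * t n) * ‖v‖ ^ 2 := fun n =>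
    hU.two_mul_mul_infDist_add_smul_le ha hb (ht0 n).le (ht1 n) hT hTr
  refine exists_mem_tanCone_norm_sub_le_of_tendsto (x := fun n => nearestPt A (y n))
    (c := fun n => (t n)⁻¹) (ρ := fun n => (1 + 4 * t n) * ‖v‖ ^ 2 / (2 * T))
    (fun n => nearestPt_mem (hyU n)) ?_ (fun n => inv_pos.2 (ht0 n)) ?_ fun n => ?_
  · refine tendsto_iff_dist_tendsto_zero.2 (squeeze_zero (fun _ => dist_nonneg)
      (fun n => ?_) (by simpa using (htlim.mul_const ‖v‖).const_mul 2))
    have := dist_triangle (nearestPt A (y n)) (y n) a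
    rw [dist_comm _ (y n), dist_nearestPt (hyU n), dist_eq_norm (y n), hya] at this
    linarith [hδy n]
  · simpa using ((htlim.const_mul 4).const_add 1).mul_const (‖v‖ ^ 2) |>.div_const (2 * T)
  · have hv : v - (t n)⁻¹ • (nearestPt A (y n) - a) = (t n)⁻¹ • (y n - nearestPt A (y n)) := by
      simp only [y, smul_sub, smul_add, smul_smul, inv_mul_cancel₀ (ht0 n).ne', one_smul]
      abel
    rw [hv, norm_smul, norm_sub_nearestPt (hyU n), Real.norm_of_nonneg (inv_pos.2 (ht0 n)).le,
      le_div_iff₀ (by positivity)]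
    have := hchord n
    have := ht0 n
    field_simp
    nlinarith

end UniqueNearestWithin

end

section Projection

variable {E : Type*} [NormedAddCommGroup E] [InnerProductSpace ℝ E]

lemma Submodule.span_eq_span_singleton_of_finrank_eq_one {C : Set E}
    (hdim : Module.finrank ℝ (span ℝ C) = 1) {w : E} (hw : w ∈ C) (hw0 : w ≠ 0) :
    span ℝ C = ℝ ∙ w := by
  have : FiniteDimensional ℝ (span ℝ C) := Module.finite_of_finrank_eq_succ hdim
  refine (eq_of_le_of_finrank_le (span_le.2 (singleton_subset_iff.2 (subset_span hw))) ?_).symm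
  rw [hdim, finrank_span_singleton hw0]

lemma Submodule.starProjection_span_mem_of_inner_pos {C : Set E}
    [(span ℝ C).HasOrthogonalProjection] (hC : ∀ u ∈ C, ∀ c : ℝ, 0 < c → c • u ∈ C)
    (hdim : Module.finrank ℝ (span ℝ C) = 1) {v w : E} (hw : w ∈ C) (hwv : 0 < ⟪w, v⟫) :
    (span ℝ C).starProjection v ∈ C := by
  have hw0 : w ≠ 0 := by rintro rfl; simp at hwv
  have hK := span_eq_span_singleton_of_finrank_eq_one hdim hw hw0
  simp only [hK, starProjection_singleton]
  exact hC w hw _ (div_pos hwv (by positivity))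

lemma Submodule.norm_sq_eq_norm_starProjection_sq_add (K : Submodule ℝ E)
    [K.HasOrthogonalProjection] (v : E) :
    ‖v‖ ^ 2 = ‖K.starProjection v‖ ^ 2 + ‖v - K.starProjection v‖ ^ 2 := by
  rw [norm_sq_eq_add_norm_sq_starProjection v K, starProjection_orthogonal_val]

lemma Submodule.norm_sub_starProjection_le {K : Submodule ℝ E} [K.HasOrthogonalProjection]
    (v : E) {w : E} (hw : w ∈ K) : ‖v - K.starProjection v‖ ≤ ‖v - w‖ := by
  rw [starProjection_minimal]
  exact ciInf_le ⟨0, forall_mem_range.2 fun _ => norm_nonneg _⟩ (⟨w, hw⟩ : K)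

lemma Submodule.sqrt_three_mul_norm_le_norm_starProjection {K : Submodule ℝ E}
    [K.HasOrthogonalProjection] {v w : E} (hw : w ∈ K) (hvw : ‖v - w‖ ≤ ‖v‖ / 2) :
    √3 / 2 * ‖v‖ ≤ ‖K.starProjection v‖ ∧
      √3 * ‖v - K.starProjection v‖ ≤ ‖K.starProjection v‖ := by
  have hpyth := K.norm_sq_eq_norm_starProjection_sq_add v
  have hperp : ‖v - K.starProjection v‖ ≤ ‖v‖ / 2 := (K.norm_sub_starProjection_le v hw).trans hvw
  have h3 : √3 ^ 2 = 3 := Real.sq_sqrt (by norm_num)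
  have hq := norm_nonneg (v - K.starProjection v)
  constructor <;> refine abs_le_of_sq_le_sq' ?_ (norm_nonneg _) |>.2 <;> nlinarith

end Projection

theorem stmt5_general {d : ℕ} (A : Set (Euc d)) (r : ℝ)
    (hrA : ENNReal.ofReal r < reach A) (a b : Euc d) (ha : a ∈ A) (hb : b ∈ A)
    (hab : b ≠ a) (hlt : ‖b - a‖ < r)
    (hdim : Module.finrank ℝ (Submodule.span ℝ (tanCone A a)) = 1) :
    ((Submodule.orthogonalProjectionOnto (Submodule.span ℝ (tanCone A a)) (b - a) : Euc d) ∈ tanCone A a) ∧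
    Real.sqrt 3 / 2 * ‖b - a‖ ≤
      ‖(Submodule.orthogonalProjectionOnto (Submodule.span ℝ (tanCone A a)) (b - a) : Euc d)‖ ∧
    Real.sqrt 3 *
        ‖(b - a) - (Submodule.orthogonalProjectionOnto (Submodule.span ℝ (tanCone A a)) (b - a) : Euc d)‖ ≤
      ‖(Submodule.orthogonalProjectionOnto (Submodule.span ℝ (tanCone A a)) (b - a) : Euc d)‖ := by
  have hU := uniqueNearestWithin_of_lt_reach hrA ⟨a, ha⟩
  have hv0 : 0 < ‖b - a‖ := norm_pos_iff.2 (sub_ne_zero.2 hab)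
  obtain ⟨w, hwT, hw⟩ := hU.exists_mem_tanCone_norm_sub_le ha hb
    (T := (‖b - a‖ + r) / 2) (by linarith) (by linarith)
  have hclose : ‖(b - a) - w‖ < ‖b - a‖ / 2 :=
    hw.trans_lt (by rw [div_lt_div_iff₀ (by linarith) two_pos]; nlinarith)
  have hwv : 0 < ⟪w, b - a⟫ := by
    have := norm_sub_sq_real (b - a) w
    nlinarith [norm_nonneg ((b - a) - w), norm_nonneg w, real_inner_comm w (b - a)]
  exact ⟨Submodule.starProjection_span_mem_of_inner_pos (fun u hu c hc => smul_mem_tanCone hu hc)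
    hdim hwT hwv, Submodule.sqrt_three_mul_norm_le_norm_starProjection
    (Submodule.subset_span hwT) hclose.le⟩

theorem stmt5 {d : ℕ} (A : Set (Euc d)) (r : ℝ) (hr : 0 < r)
    (hrA : ENNReal.ofReal r < reach A) (a b : Euc d) (ha : a ∈ A) (hb : b ∈ A)
    (hab : b ≠ a) (hlt : ‖b - a‖ < r)
    (hdim : Module.finrank ℝ (Submodule.span ℝ (tanCone A a)) = 1) :
    ((Submodule.orthogonalProjectionOnto (Submodule.span ℝ (tanCone A a)) (b - a) : Euc d) ∈ tanCone A a) ∧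
    Real.sqrt 3 / 2 * ‖b - a‖ ≤
      ‖(Submodule.orthogonalProjectionOnto (Submodule.span ℝ (tanCone A a)) (b - a) : Euc d)‖ ∧
    Real.sqrt 3 *
        ‖(b - a) - (Submodule.orthogonalProjectionOnto (Submodule.span ℝ (tanCone A a)) (b - a) : Euc d)‖ ≤
      ‖(Submodule.orthogonalProjectionOnto (Submodule.span ℝ (tanCone A a)) (b - a) : Euc d)‖ :=
  stmt5_general A r hrA a b ha hb hab hlt hdim
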